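/- Let r₁,…,rₙ ∈ ℝ³ with ∑ᵢ rᵢ = 0 and let J̄ = I₃ + (1/n)∑ᵢ S(rᵢ)S(rᵢ)ᵀ be invertible. Then the Moore-Penrose pseudo-inverse G† = Gᵀ(GGᵀ)⁻¹ of the rigid-contact grasp matrix equals (1/n) times the block matrix whose i-th block rows are [I₃, S(rᵢ)ᵀ J̄⁻¹] and [0₃, J̄⁻¹]. -/

import Mathlib

open Matrix

/-- Skew-symmetric cross-product matrix `S(r)` with `S(r) *ᵥ a = r ×₃ a`. -/
def skew (r : Fin 3 → ℝ) : Matrix (Fin 3) (Fin 3) ℝ :=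
  !![0, -r 2, r 1; r 2, 0, -r 0; -r 1, r 0, 0]

/-- Rigid-contact grasp matrix `G = [I₃ 0₃ … I₃ 0₃ ; S(r₁) I₃ … S(rₙ) I₃]`. -/
def graspG (n : ℕ) (r : Fin n → Fin 3 → ℝ) :
    Matrix (Fin 3 ⊕ Fin 3) (Fin n × (Fin 3 ⊕ Fin 3)) ℝ :=
  Matrix.of fun i kj =>
    match i, kj.2 with
    | Sum.inl a, Sum.inl b => (1 : Matrix (Fin 3) (Fin 3) ℝ) a b
    | Sum.inl _, Sum.inr _ => 0
    | Sum.inr a, Sum.inl b => skew (r kj.1) a b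
    | Sum.inr a, Sum.inr b => (1 : Matrix (Fin 3) (Fin 3) ℝ) a b

/-!
Write `G` as the row of per-contact blocks `Bᵢ = [I 0; S(rᵢ) I]`. Then
`G Gᵀ = ∑ᵢ Bᵢ Bᵢᵀ = ∑ᵢ [I S(rᵢ)ᵀ; S(rᵢ) S(rᵢ)S(rᵢ)ᵀ + I]`, and since `S` is linear and
`∑ᵢ rᵢ = 0` the off-diagonal blocks cancel: `G Gᵀ = n • diag(I, J̄)`. Its inverse is
`n⁻¹ • diag(I, J̄⁻¹)`, and `Gᵀ (G Gᵀ)⁻¹` is the column of blocks `n⁻¹ • Bᵢᵀ diag(I, J̄⁻¹)`.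
-/

namespace Matrix

variable {ι l m n o α : Type*}

def blockRow (B : ι → Matrix m n α) : Matrix m (ι × n) α :=
  of fun i kj => B kj.1 i kj.2

def blockCol (B : ι → Matrix m n α) : Matrix (ι × m) n α :=
  of fun ki j => B ki.1 ki.2 j

@[simp]
theorem transpose_blockRow (B : ι → Matrix m n α) :
    (blockRow B)ᵀ = blockCol fun k => (B k)ᵀ :=
  rfl

theorem smul_blockCol {R : Type*} [SMul R α] (c : R) (B : ι → Matrix m n α) :
    c • blockCol B = blockCol fun k => c • B k :=
  rfl

theorem blockCol_mul [Fintype l] [NonUnitalNonAssocSemiring α] (B : ι → Matrix m l α)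
    (X : Matrix l n α) : blockCol B * X = blockCol fun k => B k * X :=
  rfl

theorem blockRow_mul_blockCol [Fintype ι] [Fintype l] [NonUnitalNonAssocSemiring α]
    (B : ι → Matrix m l α) (C : ι → Matrix l n α) :
    blockRow B * blockCol C = ∑ k, B k * C k := by
  ext i j
  simp [blockRow, blockCol, mul_apply, Matrix.sum_apply, Fintype.sum_prod_type]

theorem fromBlocks_sum [AddCommMonoid α] (s : Finset ι) (A : ι → Matrix n l α)
    (B : ι → Matrix n m α) (C : ι → Matrix o l α) (D : ι → Matrix o m α) :
    ∑ k ∈ s, fromBlocks (A k) (B k) (C k) (D k) =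
      fromBlocks (∑ k ∈ s, A k) (∑ k ∈ s, B k) (∑ k ∈ s, C k) (∑ k ∈ s, D k) := by
  ext (i | i) (j | j) <;> simp [Matrix.sum_apply]

theorem inv_smul_fromBlocks_one_zero_zero [Fintype m] [Fintype n] [DecidableEq m] [DecidableEq n]
    [Field α] {c : α} (hc : c ≠ 0) {D : Matrix n n α} (hD : IsUnit D.det) :
    (c • fromBlocks (1 : Matrix m m α) 0 0 D)⁻¹ = c⁻¹ • fromBlocks 1 0 0 D⁻¹ := by
  apply inv_eq_right_inv
  rw [smul_mul_smul_comm, fromBlocks_multiply, mul_inv_cancel₀ hc, mul_nonsing_inv D hD]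
  simp [fromBlocks_one]

theorem transpose_fromBlocks_one_zero_mul [Fintype m] [Fintype n] [DecidableEq m] [DecidableEq n]
    [Semiring α] (S : Matrix n m α) (D : Matrix n n α) :
    (fromBlocks 1 0 S 1)ᵀ * fromBlocks (1 : Matrix m m α) 0 0 D = fromBlocks 1 (Sᵀ * D) 0 D := by
  simp [fromBlocks_transpose, fromBlocks_multiply]

end Matrix

theorem skew_zero : skew 0 = 0 := by
  ext a b
  fin_cases a <;> fin_cases b <;> simp [skew]

theorem skew_sum {ι : Type*} (s : Finset ι) (r : ι → Fin 3 → ℝ) :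
    skew (∑ i ∈ s, r i) = ∑ i ∈ s, skew (r i) := by
  ext a b
  fin_cases a <;> fin_cases b <;> simp [skew, Matrix.sum_apply]

theorem graspG_eq_blockRow (n : ℕ) (r : Fin n → Fin 3 → ℝ) :
    graspG n r = blockRow fun k => fromBlocks 1 0 (skew (r k)) 1 := by
  ext (a | a) ⟨k, b | b⟩ <;> rfl

theorem graspG_mul_transpose {n : ℕ} {r : Fin n → Fin 3 → ℝ} (hsum : ∑ i, r i = 0) :
    graspG n r * (graspG n r)ᵀ =
      fromBlocks ((n : ℝ) • 1) 0 0 ((n : ℝ) • 1 + ∑ i, skew (r i) * (skew (r i))ᵀ) := by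
  have hskew : ∑ i, skew (r i) = 0 := by rw [← skew_sum, hsum, skew_zero]
  have hskewT : ∑ i, (skew (r i))ᵀ = 0 := by rw [← transpose_sum, hskew, transpose_zero]
  simp [graspG_eq_blockRow, blockRow_mul_blockCol, fromBlocks_transpose, fromBlocks_multiply,
    fromBlocks_sum, hskew, hskewT, Finset.sum_add_distrib, add_comm, Nat.cast_smul_eq_nsmul]

theorem grasp_pseudoinverse_formula (n : ℕ) (r : Fin n → Fin 3 → ℝ)
    (hsum : (∑ i, r i) = 0)
    (Jbar : Matrix (Fin 3) (Fin 3) ℝ)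
    (hJbar : Jbar = 1 + (n : ℝ)⁻¹ • ∑ i, skew (r i) * (skew (r i))ᵀ)
    (hinv : IsUnit Jbar.det) :
    (graspG n r)ᵀ * (graspG n r * (graspG n r)ᵀ)⁻¹ =
      (n : ℝ)⁻¹ • (Matrix.of fun (kj : Fin n × (Fin 3 ⊕ Fin 3)) (b : Fin 3 ⊕ Fin 3) =>
        match kj.2, b with
        | Sum.inl a, Sum.inl b => (1 : Matrix (Fin 3) (Fin 3) ℝ) a b
        | Sum.inl a, Sum.inr b => ((skew (r kj.1))ᵀ * Jbar⁻¹) a b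
        | Sum.inr _, Sum.inl _ => 0
        | Sum.inr a, Sum.inr b => Jbar⁻¹ a b) := by
  obtain rfl | hn := eq_or_ne n 0
  · ext ⟨k, _⟩
    exact k.elim0
  have hn' : (n : ℝ) ≠ 0 := Nat.cast_ne_zero.mpr hn
  have hGGt : graspG n r * (graspG n r)ᵀ = (n : ℝ) • fromBlocks 1 0 0 Jbar := by
    rw [graspG_mul_transpose hsum, hJbar, fromBlocks_smul, smul_zero, smul_add, smul_smul,
      mul_inv_cancel₀ hn', one_smul]
  rw [hGGt, inv_smul_fromBlocks_one_zero_zero hn' hinv, graspG_eq_blockRow, transpose_blockRow,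
    blockCol_mul]
  simp_rw [Matrix.mul_smul, transpose_fromBlocks_one_zero_mul, ← smul_blockCol]
  congr 1
  ext ⟨k, a | a⟩ (b | b) <;> rfl
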